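/- arXiv:1204.1788 — 3 statements merged into one kernel-verified Lean document; each statement's English description precedes it below -/
import Mathlib

section
/- If a sequence of convex functions u_i on a bounded open set Ω ⊂ ℝⁿ converges locally uniformly to a convex function u, then for every compact set E ⊂ Ω, limsup_{i→∞} μ[u_i](E) ≤ μ[u](E), where μ[v](E) denotes the Lebesgue measure of the subdifferential image N_v(E). -/
/-!
If `p` supports `f` at `x` and `closedBall x r ⊆ Ω`, testing at `x + r p / ‖p‖` gives
`r ‖p‖ ≤ sup_{closedBall x r} f - f x`. Since the `u i` are eventually uniformly bounded on a
compact neighbourhood of `E`, the sets `N_{u i}(E)` eventually lie in one ball, so continuity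
of the measure from above bounds the `limsup` by the measure of the closed set
`⋂ j, closure (⋃ i ≥ j, N_{u i}(E))`. A point of this set is a limit of slopes
`q_k ∈ N_{u (i_k)}(x_k)` with `i_k → ∞`; along a subsequence `x_k → x₀ ∈ E`, and the supporting
inequalities pass to the limit by locally uniform convergence and continuity of the convex
limit `v`, so the point lies in `N_v(E)`.
-/

open Set MeasureTheory Filter RealInnerProductSpace

/-- The normal mapping (subdifferential) of `u` relative to `Ω` at `x`. -/
def normalMap {n : ℕ} (Ω : Set (EuclideanSpace ℝ (Fin n)))
    (u : EuclideanSpace ℝ (Fin n) → ℝ) (x : EuclideanSpace ℝ (Fin n)) :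
    Set (EuclideanSpace ℝ (Fin n)) :=
  {p | ∀ y ∈ Ω, u x + ⟪p, y - x⟫ ≤ u y}

open Metric Topology

theorem TendstoLocallyUniformlyOn.comp_tendsto {ι ι' α β : Type*} [TopologicalSpace α]
    [UniformSpace β] {F : ι → α → β} {f : α → β} {p : Filter ι} {s : Set α}
    (h : TendstoLocallyUniformlyOn F f p s) {q : Filter ι'} {g : ι' → ι}
    (hg : Tendsto g q p) : TendstoLocallyUniformlyOn (F ∘ g) f q s := fun U hU x hx =>
  let ⟨t, ht, hev⟩ := h U hU x hx
  ⟨t, ht, hg.eventually hev⟩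

theorem limsup_measure_le_measure_iInter_closure {X : Type*} [TopologicalSpace X] [T2Space X]
    [MeasurableSpace X] [OpensMeasurableSpace X] {μ : Measure X} [IsFiniteMeasureOnCompacts μ]
    {S : ℕ → Set X} {K : Set X} (hK : IsCompact K) (hS : ∀ᶠ i in atTop, S i ⊆ K) :
    limsup (fun i => μ (S i)) atTop ≤ μ (⋂ j, closure (⋃ i ≥ j, S i)) := by
  set A : ℕ → Set X := fun j => closure (⋃ i ≥ j, S i)
  have hA : Antitone A := fun j k hjk =>
    closure_mono (biUnion_subset_biUnion_left fun i hi => hjk.trans hi)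
  obtain ⟨j₀, hj₀⟩ := eventually_atTop.mp hS
  have hAK : A j₀ ⊆ K := closure_minimal (iUnion₂_subset hj₀) hK.isClosed
  rw [hA.measure_iInter (fun j => isClosed_closure.measurableSet.nullMeasurableSet)
    ⟨j₀, ((measure_mono hAK).trans_lt hK.measure_lt_top).ne⟩]
  refine le_iInf fun j => limsup_le_of_le (by isBoundedDefault) ?_
  filter_upwards [eventually_ge_atTop j] with i hij
  exact measure_mono (subset_closure.trans' (subset_biUnion_of_mem (u := S) hij))

section NormalImage

variable {n : ℕ} {Ω : Set (EuclideanSpace ℝ (Fin n))}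

def normalImage (Ω : Set (EuclideanSpace ℝ (Fin n))) (u : EuclideanSpace ℝ (Fin n) → ℝ)
    (E : Set (EuclideanSpace ℝ (Fin n))) : Set (EuclideanSpace ℝ (Fin n)) :=
  ⋃ x ∈ E, normalMap Ω u x

theorem mul_norm_le_of_mem_normalMap {f : EuclideanSpace ℝ (Fin n) → ℝ}
    {x p : EuclideanSpace ℝ (Fin n)} {r D : ℝ} (hr : 0 < r) (hball : closedBall x r ⊆ Ω)
    (hf : ∀ y ∈ closedBall x r, f y ≤ f x + D) (hpx : p ∈ normalMap Ω f x) :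
    r * ‖p‖ ≤ D := by
  rcases eq_or_ne p 0 with rfl | hp0
  · simpa using hf x (mem_closedBall_self hr.le)
  have hp : ‖p‖ ≠ 0 := norm_ne_zero_iff.mpr hp0
  -- test the supporting hyperplane at the point of the sphere in the direction of `p`
  set y := x + (r / ‖p‖) • p
  have hyx : y - x = (r / ‖p‖) • p := add_sub_cancel_left x _
  have hy : y ∈ closedBall x r := by
    rw [mem_closedBall, dist_eq_norm, hyx, norm_smul, Real.norm_eq_abs,
      abs_of_nonneg (by positivity), div_mul_cancel₀ r hp]
  have hinner : ⟪p, y - x⟫ = r * ‖p‖ := by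
    rw [hyx, real_inner_smul_right, real_inner_self_eq_norm_sq]
    field_simp
  linarith [hpx y (hball hy), hf y hy]

theorem normalImage_subset_closedBall {f : EuclideanSpace ℝ (Fin n) → ℝ}
    {E : Set (EuclideanSpace ℝ (Fin n))} {r C : ℝ} (hr : 0 < r) (hΩ : cthickening r E ⊆ Ω)
    (hf : ∀ y ∈ cthickening r E, |f y| ≤ C) :
    normalImage Ω f E ⊆ closedBall 0 (2 * C / r) := by
  intro p hp
  obtain ⟨x, hx, hpx⟩ := mem_iUnion₂.mp hp
  have hball : closedBall x r ⊆ cthickening r E := closedBall_subset_cthickening hx r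
  have hosc : ∀ y ∈ closedBall x r, f y ≤ f x + 2 * C := fun y hy => by
    linarith [abs_le.mp (hf y (hball hy)), abs_le.mp (hf x (hball (mem_closedBall_self hr.le)))]
  rw [mem_closedBall_zero_iff, le_div_iff₀ hr, mul_comm]
  exact mul_norm_le_of_mem_normalMap hr (hball.trans hΩ) hosc hpx

theorem mem_normalMap_of_tendsto {ι : Type*} {l : Filter ι} [l.NeBot]
    {F : ι → EuclideanSpace ℝ (Fin n) → ℝ} {f : EuclideanSpace ℝ (Fin n) → ℝ}
    {x q : ι → EuclideanSpace ℝ (Fin n)} {x₀ p : EuclideanSpace ℝ (Fin n)}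
    (hΩ : IsOpen Ω) (hF : TendstoLocallyUniformlyOn F f l Ω) (hf : ContinuousWithinAt f Ω x₀)
    (hx₀ : x₀ ∈ Ω) (hx : Tendsto x l (𝓝 x₀)) (hq : Tendsto q l (𝓝 p))
    (hmem : ∀ᶠ k in l, q k ∈ normalMap Ω (F k) (x k)) : p ∈ normalMap Ω f x₀ := by
  intro y hy
  have hFx : Tendsto (fun k => F k (x k)) l (𝓝 (f x₀)) :=
    hF.tendsto_comp hf hx₀ (by rwa [hΩ.nhdsWithin_eq hx₀])
  have hinner : Tendsto (fun k => ⟪q k, y - x k⟫) l (𝓝 ⟪p, y - x₀⟫) :=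
    hq.inner (tendsto_const_nhds.sub hx)
  exact le_of_tendsto_of_tendsto (hFx.add hinner) (hF.tendsto_at hy)
    (hmem.mono fun k hk => hk y hy)

theorem iInter_closure_normalImage_subset {u : ℕ → EuclideanSpace ℝ (Fin n) → ℝ}
    {v : EuclideanSpace ℝ (Fin n) → ℝ} {E : Set (EuclideanSpace ℝ (Fin n))} (hΩ : IsOpen Ω)
    (hconv : TendstoLocallyUniformlyOn u v atTop Ω) (hv : ContinuousOn v Ω) (hE : E ⊆ Ω)
    (hEc : IsCompact E) :
    ⋂ j, closure (⋃ i ≥ j, normalImage Ω (u i) E) ⊆ normalImage Ω v E := by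
  intro p hp
  have hnear : ∀ j : ℕ, ∃ i ≥ j, ∃ x ∈ E, ∃ q ∈ normalMap Ω (u i) x,
      dist q p < 1 / (j + 1) := by
    intro j
    obtain ⟨q, hq, hqp⟩ := mem_closure_iff.mp (mem_iInter.mp hp j) _ Nat.one_div_pos_of_nat
    simp only [normalImage, mem_iUnion, exists_prop] at hq
    obtain ⟨i, hij, x, hx, hqx⟩ := hq
    exact ⟨i, hij, x, hx, q, hqx, by rwa [dist_comm]⟩
  choose i hij x hx q hqx hqp using hnear
  obtain ⟨x₀, hx₀, φ, hφ, hxφ⟩ := hEc.tendsto_subseq hx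
  have hq : Tendsto q atTop (𝓝 p) :=
    tendsto_iff_dist_tendsto_zero.mpr <| squeeze_zero (fun _ => dist_nonneg)
      (fun j => (hqp j).le) tendsto_one_div_add_atTop_nhds_zero_nat
  have hiφ : Tendsto (i ∘ φ) atTop atTop :=
    (tendsto_atTop_mono hij tendsto_id).comp hφ.tendsto_atTop
  exact mem_iUnion₂.mpr ⟨x₀, hx₀, mem_normalMap_of_tendsto hΩ (hconv.comp_tendsto hiφ)
    (hv.continuousWithinAt (hE hx₀)) (hE hx₀) hxφ (hq.comp hφ.tendsto_atTop)
    (Eventually.of_forall fun k => hqx (φ k))⟩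

end NormalImage

theorem stmt_1_general {n : ℕ} (Ω : Set (EuclideanSpace ℝ (Fin n)))
    (hΩo : IsOpen Ω)
    (u : ℕ → EuclideanSpace ℝ (Fin n) → ℝ) (v : EuclideanSpace ℝ (Fin n) → ℝ)
    (hv : ConvexOn ℝ Ω v)
    (hconv : TendstoLocallyUniformlyOn u v atTop Ω)
    (E : Set (EuclideanSpace ℝ (Fin n))) (hE : E ⊆ Ω) (hEc : IsCompact E) :
    limsup (fun i => volume (⋃ x ∈ E, normalMap Ω (u i) x)) atTop ≤
      volume (⋃ x ∈ E, normalMap Ω v x) := by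
  have hvc : ContinuousOn v Ω := hv.continuousOn hΩo
  obtain ⟨r, hr, hrΩ⟩ := hEc.exists_cthickening_subset_open hΩo hE
  have hK : IsCompact (cthickening r E) := hEc.cthickening
  obtain ⟨C, hC⟩ := hK.exists_bound_of_continuousOn (hvc.mono hrΩ)
  have hbdd : ∀ᶠ i in atTop, ∀ y ∈ cthickening r E, |u i y| ≤ C + 1 := by
    filter_upwards [Metric.tendstoUniformlyOn_iff.mp
      ((tendstoLocallyUniformlyOn_iff_tendstoUniformlyOn_of_compact hK).mp (hconv.mono hrΩ))
      1 one_pos] with i hi y hy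
    calc |u i y| = |v y - (v y - u i y)| := by rw [sub_sub_cancel]
      _ ≤ |v y| + |v y - u i y| := abs_sub _ _
      _ ≤ C + 1 := add_le_add (hC y hy) (hi y hy).le
  calc limsup (fun i => volume (normalImage Ω (u i) E)) atTop
      ≤ volume (⋂ j, closure (⋃ i ≥ j, normalImage Ω (u i) E)) :=
        limsup_measure_le_measure_iInter_closure (isCompact_closedBall 0 (2 * (C + 1) / r))
          (hbdd.mono fun i hi => normalImage_subset_closedBall hr hrΩ hi)
    _ ≤ volume (normalImage Ω v E) :=
        measure_mono (iInter_closure_normalImage_subset hΩo hconv hvc hE hEc)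

theorem stmt_1 {n : ℕ} (Ω : Set (EuclideanSpace ℝ (Fin n)))
    (hΩo : IsOpen Ω) (hΩb : Bornology.IsBounded Ω)
    (u : ℕ → EuclideanSpace ℝ (Fin n) → ℝ) (v : EuclideanSpace ℝ (Fin n) → ℝ)
    (hui : ∀ i, ConvexOn ℝ Ω (u i)) (hv : ConvexOn ℝ Ω v)
    (hconv : TendstoLocallyUniformlyOn u v atTop Ω)
    (E : Set (EuclideanSpace ℝ (Fin n))) (hE : E ⊆ Ω) (hEc : IsCompact E) :
    limsup (fun i => volume (⋃ x ∈ E, normalMap Ω (u i) x)) atTop ≤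
      volume (⋃ x ∈ E, normalMap Ω v x) :=
  stmt_1_general Ω hΩo u v hv hconv E hE hEc
end

section
/- Let g : [−1,1] → ℝ be a convex function with g ≥ 0, g(0) = 0 and g(1) = 1, and suppose there exists θ ∈ (0,1) such that every nonnegative convex function ψ vanishing at 0 obtained as ψ(t) = g(t + 1/2) − g'(1/2)t − g(1/2) satisfies ψ(−θ⁻¹/2) ≤ 2ψ(−1/2) whenever defined. If ε < (1−θ)/5, then g(1/2) ≤ (1−ε)/2; i.e., the midpoint value of g is strictly bounded away from half of g(1). -/
/-!
Write `m = g (1/2)`. Convexity squeezes the derivative between the two chord slopes through `1/2`,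
so `2 m ≤ s ≤ 2 (1 - m)`. Dropping the nonnegative term `g (1/2 - θ⁻¹/2)` from the doubling
inequality and using `g 0 = 0` leaves `s + 2 θ m ≤ 2 θ s`. This is linear in `s`, and if
`m > (1 - ε)/2` it fails at both ends of the interval `[2 m, 2 (1 - m)]`, since `ε < (1 - θ)/5`.
-/

open Set

lemma le_of_slope_bounds_of_doubling {θ ε m s : ℝ} (hθ0 : 0 < θ)
    (hεθ : ε < (1 - θ) / 5) (hlo : 2 * m ≤ s) (hhi : s ≤ 2 * (1 - m))
    (hdbl : s + 2 * θ * m ≤ 2 * θ * s) :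
    m ≤ (1 - ε) / 2 := by
  by_contra! hm
  nlinarith [mul_le_mul_of_nonneg_left hlo hθ0.le, mul_le_mul_of_nonneg_left hhi hθ0.le]

theorem stmt_6_general (g : ℝ → ℝ) (hg : ConvexOn ℝ (Icc (-1:ℝ) 1) g)
    (hnn : ∀ t ∈ Icc (-1:ℝ) 1, 0 ≤ g t) (hg0 : g 0 = 0) (hg1 : g 1 = 1)
    (s : ℝ) (hs : HasDerivAt g s (1/2))
    (θ : ℝ) (hθ : θ ∈ Ioo (0:ℝ) 1) (hdom : (-1:ℝ) ≤ -θ⁻¹/2 + 1/2)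
    (ψ : ℝ → ℝ) (hψ : ψ = fun t => g (t + 1/2) - s * t - g (1/2))
    (hdbl : ψ (-θ⁻¹/2) ≤ 2 * ψ (-1/2))
    (ε : ℝ) (hεθ : ε < (1 - θ)/5) :
    g (1/2) ≤ (1 - ε)/2 := by
  have hθ0 : 0 < θ := hθ.1
  have hx : -θ⁻¹/2 + 1/2 ∈ Icc (-1:ℝ) 1 := ⟨hdom, by linarith [inv_pos.2 hθ0]⟩
  have hlo : 2 * g (1/2) ≤ s := by
    have := hg.slope_le_of_hasDerivAt (by norm_num) (by norm_num) (by norm_num : (0:ℝ) < 1/2) hs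
    norm_num [slope_def_field, hg0] at this
    linarith
  have hhi : s ≤ 2 * (1 - g (1/2)) := by
    have := hg.le_slope_of_hasDerivAt (by norm_num) (by norm_num) (by norm_num : (1/2:ℝ) < 1) hs
    norm_num [slope_def_field, hg1] at this
    linarith
  have hdbl' : s * θ⁻¹ / 2 + g (1/2) ≤ s := by
    subst hψ
    norm_num [hg0] at hdbl
    linarith [hnn _ hx]
  have hkey : s + 2 * θ * g (1/2) ≤ 2 * θ * s := by
    have := mul_le_mul_of_nonneg_left hdbl' (by positivity : (0:ℝ) ≤ 2 * θ)
    field_simp at this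
    linarith
  exact le_of_slope_bounds_of_doubling hθ0 hεθ hlo hhi hkey

theorem stmt_6 (g : ℝ → ℝ) (hg : ConvexOn ℝ (Icc (-1:ℝ) 1) g)
    (hnn : ∀ t ∈ Icc (-1:ℝ) 1, 0 ≤ g t) (hg0 : g 0 = 0) (hg1 : g 1 = 1)
    (s : ℝ) (hs : HasDerivAt g s (1/2))
    (θ : ℝ) (hθ : θ ∈ Ioo (0:ℝ) 1) (hdom : (-1:ℝ) ≤ -θ⁻¹/2 + 1/2)
    (ψ : ℝ → ℝ) (hψ : ψ = fun t => g (t + 1/2) - s * t - g (1/2))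
    (hdbl : ψ (-θ⁻¹/2) ≤ 2 * ψ (-1/2))
    (ε : ℝ) (hε : 0 < ε) (hεθ : ε < (1 - θ)/5) :
    g (1/2) ≤ (1 - ε)/2 :=
  stmt_6_general g hg hnn hg0 hg1 s hs θ hθ hdom ψ hψ hdbl ε hεθ
end

section
/- Let u be a convex function near 0 ∈ ℝ² with C₁|x|² ≤ u(x) for all x, u(0)=0, and suppose the Monge–Ampère measure of u satisfies μ[u](E) ≤ C|E| for Borel sets E in a neighborhood of 0. Then there exists C₂ > 0 such that u(x) ≤ C₂|x|² near the origin. -/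
/-!
If `u x > ε := 4 N² C₁ ‖x‖²`, the open sublevel set `S = {u < ε}` is convex, contains `0`, lies in
the ball of radius `R = 2 N ‖x‖` by the quadratic lower bound, and misses `x`; hence it lies in a
half-space `{⟪w, ·⟫ < ‖x‖}` with `‖w‖ = 1`. A small slope `p` with `⟪p, ·⟫ ≤ ε / 2` on `S` is a
subgradient of `u` at a point of `S`: the minimiser of `u - ⟪p, ·⟫` is interior by coercivity and
lies in `S` by convexity. Such slopes fill `N` disjoint balls of radius `ρ = C₁ R / 4` strung along
`w`, so `N (C₁ / 4)ⁿ |B_R| ≤ μ[u](S) ≤ C |B_R|`, which fails once `N` is large.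
-/

open Set MeasureTheory Metric RealInnerProductSpace
open scoped ENNReal

section InnerProductSpace

variable {F : Type*} [NormedAddCommGroup F] [InnerProductSpace ℝ F]

theorem ConvexOn.lt_of_le_inner {s : Set F} {u : F → ℝ} {x p : F} {ε : ℝ}
    (hu : ConvexOn ℝ s u) (h0 : 0 ∈ s) (hu0 : u 0 = 0) (hε : 0 < ε) (hx : x ∈ s)
    (hux : u x ≤ ⟪p, x⟫) (hp : ∀ z ∈ s, u z < ε → ⟪p, z⟫ ≤ ε / 2) : u x < ε := by
  by_contra! hεx
  -- On the segment `[0, x]` the value `3ε/4` is undercut by `u` but exceeded by `⟪p, ·⟫`.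
  set t := 3 * ε / (4 * u x) with ht
  have hux0 : 0 < u x := hε.trans_le hεx
  have htu : t * u x = 3 * ε / 4 := by rw [ht]; field_simp
  have ht0 : 0 ≤ t := by positivity
  have ht1 : t ≤ 1 := by rw [ht, div_le_one (by positivity)]; linarith
  have hconv : u (t • x) ≤ t * u x := by
    simpa [hu0] using hu.2 h0 hx (sub_nonneg.2 ht1) ht0 (sub_add_cancel 1 t)
  have hpz := hp _ (hu.1.smul_mem_of_zero_mem h0 hx ⟨ht0, ht1⟩) (by linarith)
  rw [real_inner_smul_right] at hpz
  nlinarith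

theorem ConvexOn.exists_isMinOn_sub_inner [FiniteDimensional ℝ F] {r s C₁ : ℝ} {u : F → ℝ}
    {p : F} (hu : ConvexOn ℝ (ball 0 r) u) (hu0 : u 0 = 0)
    (hlow : ∀ x ∈ ball (0 : F) r, C₁ * ‖x‖ ^ 2 ≤ u x) (hs : 0 ≤ s) (hsr : s < r)
    (hp : ‖p‖ < C₁ * s) :
    ∃ x ∈ ball (0 : F) r, IsMinOn (fun y => u y - ⟪p, y⟫) (ball 0 r) x := by
  set g : F → ℝ := fun y => u y - ⟪p, y⟫
  have hsub : closedBall (0 : F) s ⊆ ball 0 r := closedBall_subset_ball hsr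
  have hg : ConvexOn ℝ (ball 0 r) g := hu.sub ((innerₛₗ ℝ p).concaveOn (convex_ball 0 r))
  obtain ⟨x, hxs, hmin⟩ := (isCompact_closedBall (0 : F) s).exists_isMinOn (f := g)
    ⟨0, mem_closedBall_self hs⟩
    (((hu.continuousOn isOpen_ball).mono hsub).sub
      (continuous_const.inner continuous_id).continuousOn)
  have hgx : g x ≤ 0 := by simpa [g, hu0] using hmin (mem_closedBall_self hs)
  -- Coercivity: on the sphere of radius `s`, `g ≥ s (C₁ s - ‖p‖) > 0 = g 0`.
  have hxs' : ‖x‖ < s := by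
    rw [mem_closedBall_zero_iff] at hxs
    refine hxs.lt_of_ne fun hxs_eq => ?_
    have hlx := hlow x (hsub (mem_closedBall_zero_iff.2 hxs))
    have hpx := real_inner_le_norm p x
    have hs0 : 0 < s := by
      rcases hs.eq_or_lt with rfl | h
      · linarith [norm_nonneg p]
      · exact h
    simp only [g] at hgx
    rw [hxs_eq] at hlx hpx
    nlinarith
  refine ⟨x, hsub hxs, IsMinOn.of_isLocalMinOn_of_convexOn (hsub hxs) ?_ hg⟩
  exact (hmin.isLocalMin (closedBall_mem_nhds_of_mem (mem_ball_zero_iff.2 hxs'))).on _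

theorem exists_norm_eq_one_inner_lt [CompleteSpace F] {S : Set F} {x : F} (hSc : Convex ℝ S)
    (hSo : IsOpen S) (hSne : S.Nonempty) (hx : x ∉ S) :
    ∃ w : F, ‖w‖ = 1 ∧ ∀ z ∈ S, ⟪w, z⟫ < ⟪w, x⟫ := by
  obtain ⟨f, hf⟩ := geometric_hahn_banach_open_point hSc hSo hx
  set v := (InnerProductSpace.toDual ℝ F).symm f
  have hv : ∀ z, ⟪v, z⟫ = f z := fun z => InnerProductSpace.toDual_symm_apply
  obtain ⟨z₀, hz₀⟩ := hSne
  have hv0 : v ≠ 0 := by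
    rintro h
    have := hf z₀ hz₀
    rw [← hv, ← hv, h, inner_zero_left, inner_zero_left] at this
    exact this.false
  refine ⟨‖v‖⁻¹ • v, by simp [norm_smul, hv0], fun z hz => ?_⟩
  rw [real_inner_smul_left, real_inner_smul_left, hv, hv]
  exact mul_lt_mul_of_pos_left (hf z hz) (by positivity)

theorem inner_le_of_mem_ball_smul {w p z : F} {a A ρ R d : ℝ} (ha : 0 ≤ a)
    (haA : a ≤ A) (hd : 0 ≤ d) (hp : p ∈ ball (a • w) ρ) (hz : ‖z‖ ≤ R) (hwz : ⟪w, z⟫ ≤ d) :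
    ⟪p, z⟫ ≤ A * d + ρ * R := by
  have hρ : 0 < ρ := pos_of_mem_ball hp
  have hpw : ‖p - a • w‖ < ρ := by rwa [mem_ball, dist_eq_norm] at hp
  have hsplit : ⟪p, z⟫ = a * ⟪w, z⟫ + ⟪p - a • w, z⟫ := by
    rw [inner_sub_left, real_inner_smul_left]; ring
  have h₁ : a * ⟪w, z⟫ ≤ A * d :=
    (mul_le_mul_of_nonneg_left hwz ha).trans (mul_le_mul_of_nonneg_right haA hd)
  have h₂ : ⟪p - a • w, z⟫ ≤ ρ * R :=
    (real_inner_le_norm _ _).trans (mul_le_mul hpw.le hz (norm_nonneg z) hρ.le)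
  linarith

theorem pairwise_disjoint_ball_smul {w : F} {ρ : ℝ} (hw : ‖w‖ = 1) (hρ : 0 ≤ ρ) :
    Pairwise (Function.onFun Disjoint fun k : ℕ => ball ((2 * k * ρ) • w) ρ) := by
  intro j k hjk
  apply ball_disjoint_ball
  have hjk' : (1 : ℝ) ≤ |(j : ℝ) - k| := by
    rcases hjk.lt_or_gt with h | h
    · rw [abs_sub_comm, abs_of_nonneg (by simp [h.le])]
      have : (j : ℝ) + 1 ≤ k := by exact_mod_cast h
      linarith
    · rw [abs_of_nonneg (by simp [h.le])]
      have : (k : ℝ) + 1 ≤ j := by exact_mod_cast h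
      linarith
  rw [dist_eq_norm, ← sub_smul, norm_smul, hw, mul_one, Real.norm_eq_abs,
    show 2 * (j : ℝ) * ρ - 2 * k * ρ = 2 * ρ * (j - k) by ring, abs_mul,
    abs_of_nonneg (by positivity)]
  nlinarith

variable [MeasurableSpace F] [BorelSpace F]

theorem natCast_mul_measure_ball_le (μ : Measure F) [μ.IsAddHaarMeasure] {w : F} {ρ : ℝ}
    {N : ℕ} {T : Set F} (hw : ‖w‖ = 1) (hρ : 0 ≤ ρ)
    (hT : ∀ k < N, ball ((2 * k * ρ) • w) ρ ⊆ T) : N * μ (ball 0 ρ) ≤ μ T := by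
  calc (N : ℝ≥0∞) * μ (ball 0 ρ)
      = ∑ k ∈ Finset.range N, μ (ball ((2 * k * ρ) • w) ρ) := by
        simp [Measure.addHaar_ball_center]
    _ = μ (⋃ k ∈ Finset.range N, ball ((2 * k * ρ) • w) ρ) :=
        (measure_biUnion_finset ((pairwise_disjoint_ball_smul hw hρ).set_pairwise _)
          fun _ _ => measurableSet_ball).symm
    _ ≤ μ T := measure_mono (iUnion₂_subset fun k hk => hT k (Finset.mem_range.1 hk))

theorem natCast_mul_pow_le_of_measure_ball_le [FiniteDimensional ℝ F] (μ : Measure F)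
    [μ.IsAddHaarMeasure] {N : ℕ} {κ R C : ℝ} (hN : 0 < N) (hκ : 0 < κ) (hR : 0 < R)
    (h : N * μ (ball 0 (κ * R)) ≤ ENNReal.ofReal C * μ (ball 0 R)) :
    N * κ ^ Module.finrank ℝ F ≤ C := by
  rw [Measure.addHaar_ball_mul_of_pos μ 0 hκ, ← mul_assoc,
    ENNReal.mul_le_mul_iff_left (measure_ball_pos μ 0 hR).ne' measure_ball_lt_top.ne,
    ← ENNReal.ofReal_natCast, ← ENNReal.ofReal_mul (Nat.cast_nonneg N),
    ENNReal.ofReal_le_ofReal_iff'] at h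
  exact h.resolve_right (not_le.2 (by positivity))

end InnerProductSpace

theorem sublevel_subset_ball {F : Type*} [NormedAddCommGroup F] {r C₁ R : ℝ} {u : F → ℝ}
    (hC₁ : 0 < C₁) (hR : 0 ≤ R) (hlow : ∀ x ∈ ball (0 : F) r, C₁ * ‖x‖ ^ 2 ≤ u x) :
    {z ∈ ball (0 : F) r | u z < C₁ * R ^ 2} ⊆ ball 0 R := by
  intro z hz
  rw [mem_ball_zero_iff, ← sq_lt_sq₀ (norm_nonneg z) hR]
  exact lt_of_mul_lt_mul_left ((hlow z hz.1).trans_lt hz.2) hC₁.le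

section Euclidean

variable {n : ℕ} {r C₁ : ℝ} {u : EuclideanSpace ℝ (Fin n) → ℝ}

theorem exists_mem_normalMap_of_inner_le (hu : ConvexOn ℝ (ball 0 r) u) (hu0 : u 0 = 0)
    (hlow : ∀ x ∈ ball (0 : EuclideanSpace ℝ (Fin n)) r, C₁ * ‖x‖ ^ 2 ≤ u x) {s ε : ℝ}
    (hs : 0 ≤ s) (hsr : s < r) (hε : 0 < ε) {p : EuclideanSpace ℝ (Fin n)}
    (hp : ‖p‖ < C₁ * s) (hpε : ∀ z ∈ ball 0 r, u z < ε → ⟪p, z⟫ ≤ ε / 2) :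
    ∃ y ∈ ball 0 r, u y < ε ∧ p ∈ normalMap (ball 0 r) u y := by
  obtain ⟨y, hy, hmin⟩ := hu.exists_isMinOn_sub_inner hu0 hlow hs hsr hp
  have h0 : (0 : EuclideanSpace ℝ (Fin n)) ∈ ball 0 r := mem_ball_self (hs.trans_lt hsr)
  have huy : u y ≤ ⟪p, y⟫ := by simpa [hu0] using hmin h0
  refine ⟨y, hy, hu.lt_of_le_inner h0 hu0 hε hy huy hpε, fun z hz => ?_⟩
  have : u y - ⟪p, y⟫ ≤ u z - ⟪p, z⟫ := hmin hz
  show u y + ⟪p, z - y⟫ ≤ u z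
  rw [inner_sub_right]
  linarith

theorem ball_subset_biUnion_normalMap (hC₁ : 0 < C₁) (hu : ConvexOn ℝ (ball 0 r) u)
    (hu0 : u 0 = 0) (hlow : ∀ x ∈ ball (0 : EuclideanSpace ℝ (Fin n)) r, C₁ * ‖x‖ ^ 2 ≤ u x)
    {N k : ℕ} (hk : k < N) {d R : ℝ} (hd : 0 ≤ d) (hdR : 2 * N * d ≤ R) (hNR : N * R < r)
    {w : EuclideanSpace ℝ (Fin n)} (hw : ‖w‖ = 1)
    (hwS : ∀ z ∈ {z ∈ ball 0 r | u z < C₁ * R ^ 2}, ⟪w, z⟫ ≤ d) :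
    ball ((2 * k * (C₁ / 4 * R)) • w) (C₁ / 4 * R) ⊆
      ⋃ y ∈ {z ∈ ball 0 r | u z < C₁ * R ^ 2}, normalMap (ball 0 r) u y := by
  intro p hp
  have hρ : 0 < C₁ / 4 * R := pos_of_mem_ball hp
  have hR : 0 < R := pos_of_mul_pos_right hρ (by positivity)
  have hkN : (k : ℝ) + 1 ≤ N := by exact_mod_cast hk
  have hr : 0 < r := by nlinarith
  have hpn : ‖p‖ < C₁ * (r / 2) := by
    have := norm_le_norm_add_norm_sub' p ((2 * k * (C₁ / 4 * R)) • w)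
    rw [norm_smul, hw, mul_one, Real.norm_eq_abs, abs_of_nonneg (by positivity),
      ← dist_eq_norm] at this
    calc ‖p‖ < 2 * N * (C₁ / 4 * R) := by nlinarith [mem_ball.1 hp]
      _ = C₁ * (N * R / 2) := by ring
      _ < C₁ * (r / 2) := by gcongr
  have hpε : ∀ z ∈ ball 0 r, u z < C₁ * R ^ 2 → ⟪p, z⟫ ≤ C₁ * R ^ 2 / 2 := fun z hz hzε => by
    have hzS : z ∈ {z ∈ ball 0 r | u z < C₁ * R ^ 2} := ⟨hz, hzε⟩
    have := inner_le_of_mem_ball_smul (A := 2 * N * (C₁ / 4 * R)) (by positivity)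
      (by nlinarith) hd hp (mem_ball_zero_iff.1 (sublevel_subset_ball hC₁ hR.le hlow hzS)).le
      (hwS z hzS)
    calc ⟪p, z⟫ ≤ 2 * N * (C₁ / 4 * R) * d + C₁ / 4 * R * R := this
      _ = C₁ / 4 * R * (2 * N * d) + C₁ / 4 * R * R := by ring
      _ ≤ C₁ / 4 * R * R + C₁ / 4 * R * R := by gcongr
      _ = C₁ * R ^ 2 / 2 := by ring
  obtain ⟨y, hy, hyε, hpy⟩ := exists_mem_normalMap_of_inner_le hu hu0 hlow (by positivity)
    (by linarith) (by positivity) hpn hpε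
  exact mem_biUnion (show y ∈ {z ∈ ball 0 r | u z < C₁ * R ^ 2} from ⟨hy, hyε⟩) hpy

theorem le_mul_norm_sq_of_volume_normalMap_le {C : ℝ} {N : ℕ} (hC₁ : 0 < C₁)
    (hu : ConvexOn ℝ (ball 0 r) u) (hu0 : u 0 = 0)
    (hlow : ∀ x ∈ ball (0 : EuclideanSpace ℝ (Fin n)) r, C₁ * ‖x‖ ^ 2 ≤ u x)
    (hMA : ∀ E ⊆ ball (0 : EuclideanSpace ℝ (Fin n)) r, MeasurableSet E →
      volume (⋃ x ∈ E, normalMap (ball (0 : EuclideanSpace ℝ (Fin n)) r) u x) ≤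
        ENNReal.ofReal C * volume E)
    (hN : 0 < N) (hNC : C < N * (C₁ / 4) ^ n) {x : EuclideanSpace ℝ (Fin n)}
    (hx : ‖x‖ < r / (2 * N ^ 2)) : u x ≤ 4 * N ^ 2 * C₁ * ‖x‖ ^ 2 := by
  by_contra! hux
  have hx0 : x ≠ 0 := by rintro rfl; simp [hu0] at hux
  have hNR : N * (2 * N * ‖x‖) < r := by
    rw [lt_div_iff₀ (by positivity)] at hx; linarith
  set R : ℝ := 2 * N * ‖x‖ with hR
  have hR0 : 0 < R := by positivity
  set S := {z ∈ ball (0 : EuclideanSpace ℝ (Fin n)) r | u z < C₁ * R ^ 2}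
  have hSo : IsOpen S :=
    (hu.continuousOn isOpen_ball).isOpen_inter_preimage isOpen_ball isOpen_Iio
  have h0S : 0 ∈ S := ⟨mem_ball_self (by nlinarith), by rw [hu0]; positivity⟩
  have hxS : x ∉ S := fun h => h.2.not_ge (by rw [hR]; linarith)
  obtain ⟨w, hw, hwS⟩ := exists_norm_eq_one_inner_lt (hu.convex_lt _) hSo ⟨0, h0S⟩ hxS
  have hwS' : ∀ z ∈ S, ⟪w, z⟫ ≤ ‖x‖ := fun z hz =>
    (hwS z hz).le.trans ((real_inner_le_norm w x).trans_eq (by rw [hw, one_mul]))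
  have hvol : N * volume (ball (0 : EuclideanSpace ℝ (Fin n)) (C₁ / 4 * R)) ≤
      ENNReal.ofReal C * volume (ball (0 : EuclideanSpace ℝ (Fin n)) R) :=
    calc _ ≤ volume (⋃ y ∈ S, normalMap (ball 0 r) u y) :=
          natCast_mul_measure_ball_le volume hw (by positivity) fun k hk =>
            ball_subset_biUnion_normalMap hC₁ hu hu0 hlow hk (norm_nonneg x) le_rfl hNR hw hwS'
      _ ≤ ENNReal.ofReal C * volume S := hMA S (fun z hz => hz.1) hSo.measurableSet
      _ ≤ _ := by gcongr; exact sublevel_subset_ball hC₁ hR0.le hlow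
  have := natCast_mul_pow_le_of_measure_ball_le volume hN (by positivity) hR0 hvol
  rw [finrank_euclideanSpace_fin] at this
  linarith

end Euclidean

theorem stmt_10_general (r C₁ C : ℝ) (hr : 0 < r) (hC₁ : 0 < C₁)
    (u : EuclideanSpace ℝ (Fin 2) → ℝ)
    (hu : ConvexOn ℝ (ball (0 : EuclideanSpace ℝ (Fin 2)) r) u) (hu0 : u 0 = 0)
    (hlow : ∀ x ∈ ball (0 : EuclideanSpace ℝ (Fin 2)) r, C₁ * ‖x‖ ^ 2 ≤ u x)
    (hMA : ∀ E ⊆ ball (0 : EuclideanSpace ℝ (Fin 2)) r, MeasurableSet E →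
      volume (⋃ x ∈ E, normalMap (ball (0 : EuclideanSpace ℝ (Fin 2)) r) u x) ≤
        ENNReal.ofReal C * volume E) :
    ∃ C₂ > (0:ℝ), ∃ ρ > (0:ℝ), ∀ x ∈ ball (0 : EuclideanSpace ℝ (Fin 2)) ρ,
      u x ≤ C₂ * ‖x‖ ^ 2 := by
  set N : ℕ := ⌊C / (C₁ / 4) ^ 2⌋₊ + 1
  have hNC : C < N * (C₁ / 4) ^ 2 := by
    rw [← div_lt_iff₀ (by positivity)]
    exact_mod_cast Nat.lt_floor_add_one _
  refine ⟨4 * N ^ 2 * C₁, by positivity, r / (2 * N ^ 2), by positivity, fun x hx => ?_⟩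
  exact le_mul_norm_sq_of_volume_normalMap_le hC₁ hu hu0 hlow hMA (by positivity) hNC
    (mem_ball_zero_iff.1 hx)

theorem stmt_10 (r C₁ C : ℝ) (hr : 0 < r) (hC₁ : 0 < C₁) (hC : 0 ≤ C)
    (u : EuclideanSpace ℝ (Fin 2) → ℝ)
    (hu : ConvexOn ℝ (ball (0 : EuclideanSpace ℝ (Fin 2)) r) u) (hu0 : u 0 = 0)
    (hlow : ∀ x ∈ ball (0 : EuclideanSpace ℝ (Fin 2)) r, C₁ * ‖x‖ ^ 2 ≤ u x)
    (hMA : ∀ E ⊆ ball (0 : EuclideanSpace ℝ (Fin 2)) r, MeasurableSet E →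
      volume (⋃ x ∈ E, normalMap (ball (0 : EuclideanSpace ℝ (Fin 2)) r) u x) ≤
        ENNReal.ofReal C * volume E) :
    ∃ C₂ > (0:ℝ), ∃ ρ > (0:ℝ), ∀ x ∈ ball (0 : EuclideanSpace ℝ (Fin 2)) ρ,
      u x ≤ C₂ * ‖x‖ ^ 2 :=
  stmt_10_general r C₁ C hr hC₁ u hu hu0 hlow hMA
end
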